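/- arXiv:2501.17503 — 2 statements merged into one kernel-verified Lean document; each statement's English description precedes it below -/
import Mathlib

section
/- Let φ be a C¹ diffeomorphism of an open set of ℝ² with everywhere invertible Jacobian matrix ∂φ, and write ∇^φ f = ((∂φ)^{-1})ᵀ∇f, ∂_j^φ the components of ∇^φ, and for a vector a = (a₁,a₂)ᵀ, a^⊥ = (−a₂,a₁)ᵀ. Then for any differentiable ℝ²-valued functions f and q one has the pointwise identity: ∇^φ·{ ((f·q)² − (f^⊥·q)²) f + 2(f·q)(f^⊥·q) f^⊥ } = (∇^φ·f)((f·q)² − (f^⊥·q)²) + 2(∇^φ·f^⊥)(f·q)(f^⊥·q) + 2|f|²{ ((q·∇^φ)f + (q^⊥·∇^φ)f^⊥)·q + (f·q)(∇^φ·q) − (f^⊥·q)((∇^φ)^⊥·q) }. -/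
noncomputable section
open MeasureTheory

abbrev E2 : Type := EuclideanSpace ℝ (Fin 2)

def e2 (i : Fin 2) : E2 := EuclideanSpace.single i 1

/-- ordinary partial derivative -/
def pD (i : Fin 2) (f : E2 → ℝ) : E2 → ℝ := fun x => fderiv ℝ f x (e2 i)

/-- Jacobian matrix ∂φ -/
def jac (Φ : E2 → E2) (x : E2) : Matrix (Fin 2) (Fin 2) ℝ :=
  Matrix.of fun i j => fderiv ℝ (fun y => Φ y i) x (e2 j)

/-- twisted partial derivative ∂_j^φ f = (((∂φ)⁻¹)ᵀ ∇f)_j = Σ_l ((∂φ)⁻¹)_{l j} ∂_l f -/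
def dP (Φ : E2 → E2) (j : Fin 2) (f : E2 → ℝ) : E2 → ℝ := fun x =>
  ∑ l, (jac Φ x)⁻¹ l j * pD l f x

/-- twisted divergence ∇^φ·g = ∂₁^φ g₁ + ∂₂^φ g₂ of the field with components g0, g1 -/
def divP (Φ : E2 → E2) (g0 g1 : E2 → ℝ) (x : E2) : ℝ :=
  dP Φ 0 g0 x + dP Φ 1 g1 x

/-- twisted curl (∇^φ)^⊥·g = −∂₂^φ g₁ + ∂₁^φ g₂ -/
def curlP (Φ : E2 → E2) (g0 g1 : E2 → ℝ) (x : E2) : ℝ :=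
  - dP Φ 1 g0 x + dP Φ 0 g1 x

lemma pD_big (a b c d e g : E2 → ℝ) (x : E2)
    (ha : DifferentiableAt ℝ a x) (hb : DifferentiableAt ℝ b x)
    (hc : DifferentiableAt ℝ c x) (hd : DifferentiableAt ℝ d x)
    (he : DifferentiableAt ℝ e x) (hg : DifferentiableAt ℝ g x) (l : Fin 2) :
    pD l (fun y => ((a y * c y + b y * d y)^2 - (-(b y) * c y + a y * d y)^2) * e y
        + 2 * (a y * c y + b y * d y) * (-(b y) * c y + a y * d y) * g y) x
    = (2*(a x*c x + b x*d x)*(pD l a x*c x + a x*pD l c x + pD l b x*d x + b x*pD l d x)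
       - 2*(-(b x)*c x + a x*d x)*(-(pD l b x)*c x + -(b x)*pD l c x + pD l a x*d x + a x*pD l d x)) * e x
      + ((a x*c x + b x*d x)^2 - (-(b x)*c x + a x*d x)^2) * pD l e x
      + 2*((pD l a x*c x + a x*pD l c x + pD l b x*d x + b x*pD l d x)*(-(b x)*c x + a x*d x)
           + (a x*c x + b x*d x)*(-(pD l b x)*c x + -(b x)*pD l c x + pD l a x*d x + a x*pD l d x)) * g x
      + 2*(a x*c x + b x*d x)*(-(b x)*c x + a x*d x)*pD l g x := by
  have ha' := ha.hasFDerivAt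
  have hb' := hb.hasFDerivAt
  have hc' := hc.hasFDerivAt
  have hd' := hd.hasFDerivAt
  have he' := he.hasFDerivAt
  have hg' := hg.hasFDerivAt
  have hS := (ha'.mul hc').add (hb'.mul hd')
  have hT := (hb'.neg.mul hc').add (ha'.mul hd')
  have hS2 := hS.mul hS
  have hT2 := hT.mul hT
  simp only [← pow_two] at hS2 hT2
  have H := ((hS2.sub hT2).mul he').add (((hS.const_mul 2).mul hT).mul hg')
  have := H.fderiv
  simp only [pD]
  erw [this]
  simp [ContinuousLinearMap.add_apply, ContinuousLinearMap.sub_apply,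
    ContinuousLinearMap.smul_apply, ContinuousLinearMap.neg_apply, smul_eq_mul]
  ring

/-- Rellich-type pointwise identity: for a C¹ diffeomorphism φ of an
open set U ⊆ ℝ² with everywhere invertible Jacobian and any differentiable ℝ²-valued
functions f, q one has, writing f·q, f^⊥·q for the pointwise products,
∇^φ·{((f·q)² − (f^⊥·q)²) f + 2 (f·q)(f^⊥·q) f^⊥}
  = (∇^φ·f)((f·q)² − (f^⊥·q)²) + 2 (∇^φ·f^⊥)(f·q)(f^⊥·q)
    + 2|f|²{ ((q·∇^φ)f + (q^⊥·∇^φ)f^⊥)·q + (f·q)(∇^φ·q) − (f^⊥·q)((∇^φ)^⊥·q) }. -/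
theorem rellich_pointwise_identity
    (U : Set E2) (hU : IsOpen U)
    (φ : E2 → E2) (hφ : ContDiffOn ℝ 1 φ U) (hφinj : Set.InjOn φ U)
    (hjac : ∀ x ∈ U, IsUnit (jac φ x).det)
    (f q : E2 → E2)
    (hf : ∀ i : Fin 2, DifferentiableOn ℝ (fun y => f y i) U)
    (hq : ∀ i : Fin 2, DifferentiableOn ℝ (fun y => q y i) U) :
    ∀ x ∈ U,
      divP φ
        (fun y => ((f y 0 * q y 0 + f y 1 * q y 1)^2
                    - (-(f y 1) * q y 0 + f y 0 * q y 1)^2) * f y 0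
                  + 2 * (f y 0 * q y 0 + f y 1 * q y 1)
                      * (-(f y 1) * q y 0 + f y 0 * q y 1) * (-(f y 1)))
        (fun y => ((f y 0 * q y 0 + f y 1 * q y 1)^2
                    - (-(f y 1) * q y 0 + f y 0 * q y 1)^2) * f y 1
                  + 2 * (f y 0 * q y 0 + f y 1 * q y 1)
                      * (-(f y 1) * q y 0 + f y 0 * q y 1) * (f y 0)) x
      =
      divP φ (fun y => f y 0) (fun y => f y 1) x *
          ((f x 0 * q x 0 + f x 1 * q x 1)^2
            - (-(f x 1) * q x 0 + f x 0 * q x 1)^2)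
      + 2 * divP φ (fun y => -(f y 1)) (fun y => f y 0) x *
          (f x 0 * q x 0 + f x 1 * q x 1) * (-(f x 1) * q x 0 + f x 0 * q x 1)
      + 2 * (f x 0 ^ 2 + f x 1 ^ 2) *
          ( -- ((q·∇^φ)f + (q^⊥·∇^φ)f^⊥)·q
            ( (q x 0 * dP φ 0 (fun y => f y 0) x + q x 1 * dP φ 1 (fun y => f y 0) x
               + (-(q x 1)) * dP φ 0 (fun y => -(f y 1)) x
               + q x 0 * dP φ 1 (fun y => -(f y 1)) x) * q x 0
            + (q x 0 * dP φ 0 (fun y => f y 1) x + q x 1 * dP φ 1 (fun y => f y 1) x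
               + (-(q x 1)) * dP φ 0 (fun y => f y 0) x
               + q x 0 * dP φ 1 (fun y => f y 0) x) * q x 1 )
          + (f x 0 * q x 0 + f x 1 * q x 1) *
              divP φ (fun y => q y 0) (fun y => q y 1) x
          - (-(f x 1) * q x 0 + f x 0 * q x 1) *
              curlP φ (fun y => q y 0) (fun y => q y 1) x ) := by
  intro x hx
  have hmem := hU.mem_nhds hx
  have hf0 : DifferentiableAt ℝ (fun y => f y 0) x := ((hf 0) x hx).differentiableAt hmem
  have hf1 : DifferentiableAt ℝ (fun y => f y 1) x := ((hf 1) x hx).differentiableAt hmem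
  have hq0 : DifferentiableAt ℝ (fun y => q y 0) x := ((hq 0) x hx).differentiableAt hmem
  have hq1 : DifferentiableAt ℝ (fun y => q y 1) x := ((hq 1) x hx).differentiableAt hmem
  have HG0 := pD_big (fun y => f y 0) (fun y => f y 1) (fun y => q y 0) (fun y => q y 1)
    (fun y => f y 0) (fun y => -(f y 1)) x hf0 hf1 hq0 hq1 hf0 hf1.neg
  have HG1 := pD_big (fun y => f y 0) (fun y => f y 1) (fun y => q y 0) (fun y => q y 1)
    (fun y => f y 1) (fun y => f y 0) x hf0 hf1 hq0 hq1 hf1 hf0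
  have hneg : ∀ l : Fin 2, pD l (fun y => -(f y 1)) x = -pD l (fun y => f y 1) x := by
    intro l; simp [pD, fderiv_neg]
  simp only [divP, dP, curlP, Fin.sum_univ_two]
  simp only [HG0, HG1, hneg]
  ring
end
end

section
/- Let 𝚐, h > 0, w, N, a ∈ ℝ², and define the 3×3 matrix A(u,N,a) = [[N·w, h Nᵀ],[𝚐 N, N⊗w + a⊗N^⊥]], where N⊗w = N wᵀ and a⊗N^⊥ = a (N^⊥)ᵀ are 2×2 matrices and N^⊥ = (−N₂,N₁)ᵀ. Then det A(u,N,a) = (a^⊥·N)(𝚐h|N|² − (w·N)²). In particular, taking a = −N^⊥ gives det A = |N|²(𝚐h|N|² − (w·N)²), which is strictly positive whenever N ≠ 0 and 𝚐h − |w|² > 0. -/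
noncomputable section

/-- for `A(u,N,a) = [[N·w, h Nᵀ],[𝚐 N, N⊗w + a⊗N^⊥]]` one has
`det A(u,N,a) = (a^⊥·N)(𝚐h|N|² − (w·N)²)`; in particular with `a = −N^⊥` one gets
`det A = |N|²(𝚐h|N|² − (w·N)²)`, which is strictly positive whenever `N ≠ 0` and
`𝚐h − |w|² > 0`. -/
theorem det_boundary_matrix
    (g h : ℝ) (w N a : Fin 2 → ℝ)
    (A : (Fin 2 → ℝ) → Matrix (Fin 3) (Fin 3) ℝ)
    -- A(u,N,b) for an arbitrary vector b (second block row: 𝚐N, N⊗w + b⊗N^⊥)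
    (hA : ∀ b : Fin 2 → ℝ, A b = Matrix.of
      ![![N 0 * w 0 + N 1 * w 1, h * N 0, h * N 1],
        ![g * N 0, N 0 * w 0 + b 0 * (-(N 1)), N 0 * w 1 + b 0 * N 0],
        ![g * N 1, N 1 * w 0 + b 1 * (-(N 1)), N 1 * w 1 + b 1 * N 0]]) :
    -- the determinant formula
    (A a).det = (-(a 1) * N 0 + a 0 * N 1) *
        (g * h * (N 0 ^ 2 + N 1 ^ 2) - (w 0 * N 0 + w 1 * N 1) ^ 2) ∧
    -- the special choice a = −N^⊥ = (N₂, −N₁)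
    (A ![N 1, -(N 0)]).det =
        (N 0 ^ 2 + N 1 ^ 2) *
        (g * h * (N 0 ^ 2 + N 1 ^ 2) - (w 0 * N 0 + w 1 * N 1) ^ 2) ∧
    (N ≠ 0 → 0 < g * h - (w 0 ^ 2 + w 1 ^ 2) → 0 < (A ![N 1, -(N 0)]).det) := by
  have key : ∀ b : Fin 2 → ℝ, (A b).det = (-(b 1) * N 0 + b 0 * N 1) *
      (g * h * (N 0 ^ 2 + N 1 ^ 2) - (w 0 * N 0 + w 1 * N 1) ^ 2) := by
    intro b
    rw [hA b, Matrix.det_fin_three]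
    simp [Matrix.of_apply]
    ring
  refine ⟨key a, ?_, ?_⟩
  · rw [key]
    simp only [Matrix.cons_val_zero, Matrix.cons_val_one, Matrix.head_cons]
    ring
  · intro hN hsub
    rw [key]
    simp only [Matrix.cons_val_zero, Matrix.cons_val_one, Matrix.head_cons]
    have hN2 : 0 < N 0 ^ 2 + N 1 ^ 2 := by
      rcases (by simpa [funext_iff, Fin.forall_fin_two] using hN : ¬(N 0 = 0 ∧ N 1 = 0)) with h'
      by_contra hle
      push_neg at hle
      have h0 : N 0 = 0 := by nlinarith [sq_nonneg (N 0), sq_nonneg (N 1)]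
      have h1 : N 1 = 0 := by nlinarith [sq_nonneg (N 0), sq_nonneg (N 1)]
      exact h' ⟨h0, h1⟩
    have hT : (g * h - (w 0 ^ 2 + w 1 ^ 2)) * (N 0 ^ 2 + N 1 ^ 2) ≤
        g * h * (N 0 ^ 2 + N 1 ^ 2) - (w 0 * N 0 + w 1 * N 1) ^ 2 := by
      nlinarith [sq_nonneg (w 0 * N 1 - w 1 * N 0)]
    have h2 : 0 < g * h * (N 0 ^ 2 + N 1 ^ 2) - (w 0 * N 0 + w 1 * N 1) ^ 2 :=
      lt_of_lt_of_le (mul_pos hsub hN2) hT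
    nlinarith [mul_pos hN2 h2]
end
end
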